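/- Let 3 ≤ q ≤ 4 and α ∈ (0, α*(q)). Define g(t) = ψ(t)²/t^{q-3}, where ψ(t) = f'(t)² - 2 f(t) f''(t) and f(t) = t² - 1 - α t^q, and let x̂ be the unique positive zero of f', which lies in (x₀(α), x₁(α)). Then g(x₀(α)) < g(x̂) < g(x₁(α)). -/

import Mathlib

open Set Filter MeasureTheory

noncomputable def fQ (q α t : ℝ) : ℝ := t ^ 2 - 1 - α * t ^ q

noncomputable def alphaStar (q : ℝ) : ℝ := 2 / (q - 2) * ((q - 2) / q) ^ (q / 2)

noncomputable def x0 (q α : ℝ) : ℝ := sInf {t : ℝ | 0 < t ∧ fQ q α t = 0}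

noncomputable def x1 (q α : ℝ) : ℝ := sSup {t : ℝ | 0 < t ∧ fQ q α t = 0}

noncomputable def Iq (q α : ℝ) : ℝ := ∫ t in x0 q α..x1 q α, 1 / Real.sqrt (fQ q α t)

noncomputable def fQd1 (q α t : ℝ) : ℝ := 2 * t - α * q * t ^ (q - 1)

noncomputable def fQd2 (q α t : ℝ) : ℝ := 2 - α * q * (q - 1) * t ^ (q - 2)

noncomputable def fQd3 (q α t : ℝ) : ℝ := -(α * q * (q - 1) * (q - 2) * t ^ (q - 3))

noncomputable def psiQ (q α t : ℝ) : ℝ := fQd1 q α t ^ 2 - 2 * fQ q α t * fQd2 q α t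

/-!
The function `f` increases on `(0, x̂)` and decreases on `(x̂, ∞)`, so `x₀ < x̂ < x₁` are its only
positive zeros. Since `f'(x̂) = 0` and `f''(x̂) = -2(q-2)`, one has `ψ(x̂) = 4(q-2) f(x̂)`, while
`ψ(r) = f'(r)²` at a zero `r` of `f`. Writing `r = μ² x̂` and using `f(r) = 0` to eliminate the
constant term gives `q (μ ψ(x̂) - ψ(r)) = 4 x̂² μ Φ(μ)` for the explicit function `Φ = comparisonFun q`,
which vanishes at `1` and is strictly decreasing on `(0, ∞)` for `q > 5/2`. Hence `ψ(x₀)² x̂ < ψ(x̂)² x₀` and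
`ψ(x̂)² x₁ < ψ(x₁)² x̂`, and because `q - 3 ≤ 1` these comparisons of `ψ²/t` persist for `ψ²/t^(q-3)`.
-/

lemma rpow_eq_rpow_sub_mul {t : ℝ} (ht : 0 < t) (y : ℝ) (n : ℕ) : t ^ y = t ^ (y - n) * t ^ n := by
  rw [← Real.rpow_natCast, ← Real.rpow_add ht, sub_add_cancel]

lemma exists_pos_sq_mul_eq {r x : ℝ} (hr : 0 < r) (hx : 0 < x) : ∃ μ, 0 < μ ∧ r = μ ^ 2 * x :=
  ⟨√(r / x), Real.sqrt_pos.2 (div_pos hr hx), by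
    rw [Real.sq_sqrt (div_pos hr hx).le, div_mul_cancel₀ _ hx.ne']⟩

lemma sq_div_rpow_lt_sq_div_rpow {A B s t e : ℝ} (hs : 0 < s) (hst : s ≤ t) (he : e ≤ 1)
    (h : A ^ 2 * t < B ^ 2 * s) : A ^ 2 / s ^ e < B ^ 2 / t ^ e := by
  have ht : 0 < t := hs.trans_le hst
  have hsplit : ∀ {u : ℝ}, 0 < u → u ^ e = u ^ (e - 1) * u := fun hu => by
    simpa using rpow_eq_rpow_sub_mul hu e 1
  rw [div_lt_div_iff₀ (Real.rpow_pos_of_pos hs e) (Real.rpow_pos_of_pos ht e), hsplit hs, hsplit ht]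
  calc A ^ 2 * (t ^ (e - 1) * t) ≤ A ^ 2 * t * s ^ (e - 1) := by
        rw [mul_comm (t ^ (e - 1)), ← mul_assoc]
        exact mul_le_mul_of_nonneg_left (Real.rpow_le_rpow_of_nonpos hs hst (by linarith)) (by positivity)
    _ < B ^ 2 * s * s ^ (e - 1) := mul_lt_mul_of_pos_right h (Real.rpow_pos_of_pos hs _)
    _ = B ^ 2 * (s ^ (e - 1) * s) := by ring

noncomputable def comparisonFun (q μ : ℝ) : ℝ :=
  (q - 2) * (q - 2 - q * μ ^ 4 + 2 * μ ^ 4 * μ ^ (2 * (q - 2))) - q * μ ^ 3 * (1 - μ ^ (2 * (q - 2))) ^ 2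

lemma comparisonFun_one (q : ℝ) : comparisonFun q 1 = 0 := by
  simp [comparisonFun]

lemma hasDerivAt_comparisonFun (q : ℝ) {μ : ℝ} (hμ : 0 < μ) :
    HasDerivAt (comparisonFun q)
      (-(q * μ ^ 2 * (1 - μ ^ (2 * (q - 2))) *
        (4 * (q - 2) * (μ - μ ^ (2 * (q - 2))) + 3 * (1 - μ ^ (2 * (q - 2)))))) μ := by
  have hw : HasDerivAt (fun μ : ℝ => μ ^ (2 * (q - 2))) (2 * (q - 2) * μ ^ (2 * (q - 2) - 1)) μ :=
    Real.hasDerivAt_rpow_const (Or.inl hμ.ne')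
  have hμw : μ ^ (2 * (q - 2)) = μ * μ ^ (2 * (q - 2) - 1) := by
    conv_lhs => rw [show 2 * (q - 2) = 1 + (2 * (q - 2) - 1) by ring, Real.rpow_add hμ, Real.rpow_one]
  have h := (((hasDerivAt_pow 4 μ).const_mul q).const_sub (q - 2)).add
    (((hasDerivAt_pow 4 μ).const_mul 2).mul hw) |>.const_mul (q - 2) |>.sub
    (((hasDerivAt_pow 3 μ).const_mul q).mul ((hw.const_sub 1).pow 2))
  refine h.congr_deriv ?_
  simp only [Pi.pow_apply]
  rw [hμw]
  push_cast
  ring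

lemma deriv_comparisonFun_neg {q μ : ℝ} (hq : 5 / 2 < q) (hμ : 0 < μ) (hμ1 : μ ≠ 1) :
    deriv (comparisonFun q) μ < 0 := by
  rw [(hasDerivAt_comparisonFun q hμ).deriv, neg_lt_zero]
  have hexp : 1 < 2 * (q - 2) := by linarith
  have hsign : 0 < (1 - μ ^ (2 * (q - 2))) *
      (4 * (q - 2) * (μ - μ ^ (2 * (q - 2))) + 3 * (1 - μ ^ (2 * (q - 2)))) := by
    rcases hμ1.lt_or_gt with h1 | h1
    · have hw : μ ^ (2 * (q - 2)) < μ := by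
        simpa using Real.rpow_lt_rpow_of_exponent_gt hμ h1 hexp
      exact mul_pos (by linarith) (by nlinarith)
    · have hw : μ < μ ^ (2 * (q - 2)) := by
        simpa using Real.rpow_lt_rpow_of_exponent_lt h1 hexp
      exact mul_pos_of_neg_of_neg (by linarith) (by nlinarith)
  have : 0 < q * μ ^ 2 := by positivity
  nlinarith

lemma strictAntiOn_comparisonFun {q : ℝ} (hq : 5 / 2 < q) :
    StrictAntiOn (comparisonFun q) (Ioi 0) := by
  have hcont : ∀ s ⊆ Ioi (0 : ℝ), ContinuousOn (comparisonFun q) s := fun _ hs t ht =>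
    (hasDerivAt_comparisonFun q (hs ht)).continuousAt.continuousWithinAt
  have hleft : StrictAntiOn (comparisonFun q) (Ioc 0 1) :=
    strictAntiOn_of_deriv_neg (convex_Ioc 0 1) (hcont _ Ioc_subset_Ioi_self) fun t ht => by
      rw [interior_Ioc] at ht
      exact deriv_comparisonFun_neg hq ht.1 ht.2.ne
  have hright : StrictAntiOn (comparisonFun q) (Ici 1) :=
    strictAntiOn_of_deriv_neg (convex_Ici 1) (hcont _ fun _ ht => mem_Ioi.2 (one_pos.trans_le ht)) fun t ht => by
      rw [interior_Ici] at ht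
      exact deriv_comparisonFun_neg hq (one_pos.trans ht) ht.ne'
  rw [← Ioc_union_Ici_eq_Ioi one_pos]
  exact hleft.union hright (isGreatest_Ioc one_pos) isLeast_Ici

lemma comparisonFun_pos {q μ : ℝ} (hq : 5 / 2 < q) (hμ : 0 < μ) (hμ1 : μ < 1) :
    0 < comparisonFun q μ :=
  comparisonFun_one q ▸ strictAntiOn_comparisonFun hq hμ (mem_Ioi.2 one_pos) hμ1

lemma comparisonFun_neg {q μ : ℝ} (hq : 5 / 2 < q) (hμ1 : 1 < μ) : comparisonFun q μ < 0 :=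
  comparisonFun_one q ▸ strictAntiOn_comparisonFun hq (mem_Ioi.2 one_pos) (mem_Ioi.2 (one_pos.trans hμ1)) hμ1

noncomputable def xHat (q α : ℝ) : ℝ := (2 / (α * q)) ^ (1 / (q - 2))

section
variable {q α : ℝ}

lemma xHat_pos (hα : 0 < α) (hq : 0 < q) : 0 < xHat q α :=
  Real.rpow_pos_of_pos (by positivity) _

lemma mul_xHat_rpow (hα : 0 < α) (hq : 2 < q) : α * q * xHat q α ^ (q - 2) = 2 := by
  have hαq : 0 < α * q := by positivity
  rw [xHat, one_div, Real.rpow_inv_rpow (by positivity) (by linarith)]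
  field_simp

lemma fQ_eq_of_pos {t : ℝ} (ht : 0 < t) : fQ q α t = t ^ 2 * (1 - α * t ^ (q - 2)) - 1 := by
  rw [fQ, rpow_eq_rpow_sub_mul ht q 2]
  push_cast
  ring

lemma fQd1_eq_of_pos (hα : 0 < α) (hq : 2 < q) {t : ℝ} (ht : 0 < t) :
    fQd1 q α t = α * q * t * (xHat q α ^ (q - 2) - t ^ (q - 2)) := by
  have h := mul_xHat_rpow hα hq
  rw [fQd1, rpow_eq_rpow_sub_mul ht (q - 1) 1, show q - 1 - ((1 : ℕ) : ℝ) = q - 2 by push_cast; ring,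
    pow_one]
  linear_combination (-t) * h

lemma fQd1_xHat (hα : 0 < α) (hq : 2 < q) : fQd1 q α (xHat q α) = 0 := by
  rw [fQd1_eq_of_pos hα hq (xHat_pos hα (by linarith)), sub_self, mul_zero]

lemma psiQ_xHat (hα : 0 < α) (hq : 2 < q) :
    psiQ q α (xHat q α) = 4 * (q - 2) * fQ q α (xHat q α) := by
  have h := mul_xHat_rpow hα hq
  rw [psiQ, fQd1_xHat hα hq, fQd2]
  linear_combination (2 * (q - 1) * fQ q α (xHat q α)) * h

lemma fQ_xHat (hα : 0 < α) (hq : 2 < q) :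
    fQ q α (xHat q α) = (q - 2) / q * xHat q α ^ 2 - 1 := by
  have h := mul_xHat_rpow hα hq
  rw [fQ_eq_of_pos (xHat_pos hα (by linarith))]
  field_simp
  linear_combination (-xHat q α ^ 2) * h

lemma alphaStar_eq (hα : 0 < α) (hq : 2 < q) :
    alphaStar q = α * ((q - 2) / q * xHat q α ^ 2) ^ ((q - 2) / 2) := by
  have h := mul_xHat_rpow hα hq
  have hr : 0 < (q - 2) / q := div_pos (by linarith) (by linarith)
  rw [Real.mul_rpow hr.le (by positivity), ← Real.rpow_natCast_mul (xHat_pos hα (by linarith)).le,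
    alphaStar, show q / 2 = (q - 2) / 2 + 1 by ring, Real.rpow_add_one hr.ne']
  push_cast
  rw [show (2 : ℝ) * ((q - 2) / 2) = q - 2 by ring]
  have hq2 : q - 2 ≠ 0 := by linarith
  field_simp
  linear_combination -h

lemma fQ_xHat_pos (hα : 0 < α) (hq : 2 < q) (hαs : α < alphaStar q) : 0 < fQ q α (xHat q α) := by
  rw [alphaStar_eq hα hq] at hαs
  have h1 := (lt_mul_iff_one_lt_right hα).1 hαs
  have h2 : 1 < (q - 2) / q * xHat q α ^ 2 := by
    by_contra! h
    exact h1.not_ge (Real.rpow_le_one (by positivity) h (by linarith))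
  rw [fQ_xHat hα hq]
  linarith

lemma hasDerivAt_fQ (hq : 1 ≤ q) (t : ℝ) : HasDerivAt (fQ q α) (fQd1 q α t) t := by
  have h := ((hasDerivAt_pow 2 t).sub_const 1).sub
    ((Real.hasDerivAt_rpow_const (p := q) (Or.inr hq)).const_mul α)
  refine h.congr_deriv ?_
  rw [fQd1]
  push_cast
  ring

lemma continuous_fQ (hq : 1 ≤ q) : Continuous (fQ q α) :=
  continuous_iff_continuousAt.2 fun t => (hasDerivAt_fQ hq t).continuousAt

lemma fQ_strictMonoOn (hα : 0 < α) (hq : 2 < q) : StrictMonoOn (fQ q α) (Icc 0 (xHat q α)) := by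
  refine strictMonoOn_of_deriv_pos (convex_Icc _ _) (continuous_fQ (by linarith)).continuousOn
    fun t ht => ?_
  rw [interior_Icc] at ht
  rw [(hasDerivAt_fQ (by linarith) t).deriv, fQd1_eq_of_pos hα hq ht.1]
  have := Real.rpow_lt_rpow ht.1.le ht.2 (by linarith : 0 < q - 2)
  exact mul_pos (by have := ht.1; positivity) (by linarith)

lemma fQ_strictAntiOn (hα : 0 < α) (hq : 2 < q) : StrictAntiOn (fQ q α) (Ici (xHat q α)) := by
  refine strictAntiOn_of_deriv_neg (convex_Ici _) (continuous_fQ (by linarith)).continuousOn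
    fun t ht => ?_
  rw [interior_Ici] at ht
  have ht0 : 0 < t := (xHat_pos hα (by linarith)).trans ht
  rw [(hasDerivAt_fQ (by linarith) t).deriv, fQd1_eq_of_pos hα hq ht0]
  have := Real.rpow_lt_rpow (xHat_pos hα (by linarith)).le ht (by linarith : 0 < q - 2)
  exact mul_neg_of_pos_of_neg (by positivity) (by linarith)

lemma exists_fQ_eq_zero (hα : 0 < α) (hq : 2 < q) (hαs : α < alphaStar q) :
    ∃ a b, a ∈ Ioo 0 (xHat q α) ∧ xHat q α < b ∧ fQ q α a = 0 ∧ fQ q α b = 0 := by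
  have hcont : Continuous (fQ q α) := continuous_fQ (by linarith)
  have hx := xHat_pos hα (by linarith : 0 < q)
  have hfx := fQ_xHat_pos hα hq hαs
  have hf0 : fQ q α 0 = -1 := by simp [fQ, Real.zero_rpow (by linarith : q ≠ 0)]
  obtain ⟨a, ha, hfa⟩ := intermediate_value_Ioo hx.le hcont.continuousOn
    (show (0 : ℝ) ∈ Ioo (fQ q α 0) (fQ q α (xHat q α)) by rw [hf0]; exact ⟨by norm_num, hfx⟩)
  set T := (2 / α) ^ (1 / (q - 2)) with hTdef
  have hT : 0 < T := Real.rpow_pos_of_pos (by positivity) _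
  have hxT : xHat q α < T := Real.rpow_lt_rpow (by positivity)
    (div_lt_div_of_pos_left two_pos hα (lt_mul_of_one_lt_right hα (by linarith)))
    (one_div_pos.2 (by linarith))
  have hfT : fQ q α T < 0 := by
    have hTq : α * T ^ (q - 2) = 2 := by
      rw [hTdef, one_div, Real.rpow_inv_rpow (by positivity) (by linarith), mul_div_cancel₀ _ hα.ne']
    rw [fQ_eq_of_pos hT, hTq]
    nlinarith
  obtain ⟨b, hb, hfb⟩ := intermediate_value_Ioo' hxT.le hcont.continuousOn
    (show (0 : ℝ) ∈ Ioo (fQ q α T) (fQ q α (xHat q α)) from ⟨hfT, hfx⟩)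
  exact ⟨a, b, ha, hb.1, hfa, hfb⟩

lemma setOf_fQ_eq_zero_eq_pair (hα : 0 < α) (hq : 2 < q) {a b : ℝ} (ha : a ∈ Ioo 0 (xHat q α))
    (hb : xHat q α < b) (hfa : fQ q α a = 0) (hfb : fQ q α b = 0) :
    {t : ℝ | 0 < t ∧ fQ q α t = 0} = {a, b} := by
  have hmono := fQ_strictMonoOn hα hq
  have hanti := fQ_strictAntiOn hα hq
  have hfx : fQ q α (xHat q α) ≠ 0 :=
    (hfa ▸ hmono ⟨ha.1.le, ha.2.le⟩ ⟨(xHat_pos hα (by linarith)).le, le_rfl⟩ ha.2).ne'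
  ext t
  simp only [mem_ofPred_eq, mem_insert_iff, mem_singleton_iff]
  constructor
  · rintro ⟨ht, hft⟩
    rcases lt_trichotomy t (xHat q α) with h | rfl | h
    · exact Or.inl (hmono.injOn ⟨ht.le, h.le⟩ ⟨ha.1.le, ha.2.le⟩ (hft.trans hfa.symm))
    · exact absurd hft hfx
    · exact Or.inr (hanti.injOn h.le hb.le (hft.trans hfb.symm))
  · rintro (rfl | rfl)
    · exact ⟨ha.1, hfa⟩
    · exact ⟨(xHat_pos hα (by linarith)).trans hb, hfb⟩

lemma x0_eq_and_x1_eq (hα : 0 < α) (hq : 2 < q) {a b : ℝ} (ha : a ∈ Ioo 0 (xHat q α))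
    (hb : xHat q α < b) (hfa : fQ q α a = 0) (hfb : fQ q α b = 0) :
    x0 q α = a ∧ x1 q α = b := by
  have hab : a ≤ b := (ha.2.trans hb).le
  rw [x0, x1, setOf_fQ_eq_zero_eq_pair hα hq ha hb hfa hfb, csInf_pair, csSup_pair]
  exact ⟨min_eq_left hab, max_eq_right hab⟩

lemma mul_sub_psiQ_eq_comparisonFun (hα : 0 < α) (hq : 2 < q) {μ : ℝ} (hμ : 0 < μ)
    (hroot : fQ q α (μ ^ 2 * xHat q α) = 0) :
    q * (μ * psiQ q α (xHat q α) - psiQ q α (μ ^ 2 * xHat q α)) =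
      4 * xHat q α ^ 2 * μ * comparisonFun q μ := by
  have hx := xHat_pos hα (by linarith : 0 < q)
  have hc := mul_xHat_rpow hα hq
  have hr : 0 < μ ^ 2 * xHat q α := by positivity
  have hpow : (μ ^ 2 * xHat q α) ^ (q - 2) = μ ^ (2 * (q - 2)) * xHat q α ^ (q - 2) := by
    rw [Real.mul_rpow (by positivity) hx.le, ← Real.rpow_natCast_mul hμ.le]
    push_cast
    rfl
  have hd : fQd1 q α (μ ^ 2 * xHat q α) = 2 * μ ^ 2 * xHat q α * (1 - μ ^ (2 * (q - 2))) := by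
    rw [fQd1_eq_of_pos hα hq hr, hpow]
    linear_combination μ ^ 2 * xHat q α * (1 - μ ^ (2 * (q - 2))) * hc
  have hψ : psiQ q α (μ ^ 2 * xHat q α) = fQd1 q α (μ ^ 2 * xHat q α) ^ 2 := by
    rw [psiQ, hroot]; ring
  rw [fQ_eq_of_pos hr, hpow] at hroot
  rw [hψ, hd, psiQ_xHat hα hq, fQ_eq_of_pos hx, comparisonFun]
  linear_combination (4 * (q - 2) * μ * q) * hroot
    + 4 * (2 - q) * μ * xHat q α ^ 2 * (1 - μ ^ 4 * μ ^ (2 * (q - 2))) * hc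

lemma psiQ_nonneg_of_fQ_eq_zero {t : ℝ} (ht : fQ q α t = 0) : 0 ≤ psiQ q α t := by
  rw [psiQ, ht, mul_zero, zero_mul, sub_zero]
  positivity

lemma psiQ_sq_mul_xHat_lt (hα : 0 < α) (hq : 5 / 2 < q) {r : ℝ} (hr : r ∈ Ioo 0 (xHat q α))
    (hfr : fQ q α r = 0) : psiQ q α r ^ 2 * xHat q α < psiQ q α (xHat q α) ^ 2 * r := by
  have hx := xHat_pos hα (by linarith : 0 < q)
  obtain ⟨μ, hμ, rfl⟩ := exists_pos_sq_mul_eq hr.1 hx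
  have hμ1 : μ < 1 := (sq_lt_one_iff₀ hμ.le).1 (by nlinarith [hr.2])
  have hlt : psiQ q α (μ ^ 2 * xHat q α) < μ * psiQ q α (xHat q α) := by
    have h := mul_pos (by positivity : 0 < 4 * xHat q α ^ 2 * μ) (comparisonFun_pos hq hμ hμ1)
    rw [← mul_sub_psiQ_eq_comparisonFun hα (by linarith) hμ hfr] at h
    linarith [pos_of_mul_pos_right h (by linarith : 0 ≤ q)]
  calc psiQ q α (μ ^ 2 * xHat q α) ^ 2 * xHat q α
      < (μ * psiQ q α (xHat q α)) ^ 2 * xHat q α :=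
        mul_lt_mul_of_pos_right (pow_lt_pow_left₀ hlt (psiQ_nonneg_of_fQ_eq_zero hfr) two_ne_zero) hx
    _ = psiQ q α (xHat q α) ^ 2 * (μ ^ 2 * xHat q α) := by ring

lemma psiQ_xHat_sq_mul_lt (hα : 0 < α) (hq : 5 / 2 < q) {r : ℝ} (hr : xHat q α < r)
    (hfr : fQ q α r = 0) : psiQ q α (xHat q α) ^ 2 * r < psiQ q α r ^ 2 * xHat q α := by
  have hq2 : 2 < q := by linarith
  have hx := xHat_pos hα (by linarith : 0 < q)
  have hfx : 0 < fQ q α (xHat q α) := hfr ▸ fQ_strictAntiOn hα hq2 (mem_Ici.2 le_rfl) hr.le hr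
  obtain ⟨μ, hμ, rfl⟩ := exists_pos_sq_mul_eq (hx.trans hr) hx
  have hμ1 : 1 < μ := (one_lt_sq_iff₀ hμ.le).1 (by nlinarith)
  have hlt : μ * psiQ q α (xHat q α) < psiQ q α (μ ^ 2 * xHat q α) := by
    have h := mul_neg_of_pos_of_neg (by positivity : 0 < 4 * xHat q α ^ 2 * μ) (comparisonFun_neg hq hμ1)
    rw [← mul_sub_psiQ_eq_comparisonFun hα hq2 hμ hfr] at h
    linarith [neg_of_mul_neg_right h (by linarith : 0 ≤ q)]
  have hψx : 0 ≤ μ * psiQ q α (xHat q α) := by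
    rw [psiQ_xHat hα hq2]
    have : 0 < q - 2 := by linarith
    positivity
  calc psiQ q α (xHat q α) ^ 2 * (μ ^ 2 * xHat q α)
      = (μ * psiQ q α (xHat q α)) ^ 2 * xHat q α := by ring
    _ < psiQ q α (μ ^ 2 * xHat q α) ^ 2 * xHat q α :=
        mul_lt_mul_of_pos_right (pow_lt_pow_left₀ hlt hψx two_ne_zero) hx

end

/-- for 3 ≤ q ≤ 4 and α ∈ (0, α*(q)), g(x₀) < g(x̂) < g(x₁),
where g = ψ²/t^{q-3} and x̂ is the unique positive zero of f'. -/
theorem stmt_11 (q α : ℝ) (hq3 : 3 ≤ q) (hq4 : q ≤ 4) (hα : α ∈ Ioo (0 : ℝ) (alphaStar q)) :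
    let g : ℝ → ℝ := fun t => psiQ q α t ^ 2 / t ^ (q - 3)
    let xhat : ℝ := (2 / (α * q)) ^ (1 / (q - 2))
    g (x0 q α) < g xhat ∧ g xhat < g (x1 q α) := by
  intro g xhat
  obtain ⟨hα0, hαs⟩ := hα
  have hq : 2 < q := by linarith
  obtain ⟨a, b, ha, hb, hfa, hfb⟩ := exists_fQ_eq_zero hα0 hq hαs
  obtain ⟨hx0, hx1⟩ := x0_eq_and_x1_eq hα0 hq ha hb hfa hfb
  rw [hx0, hx1]
  exact ⟨sq_div_rpow_lt_sq_div_rpow ha.1 ha.2.le (by linarith)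
      (psiQ_sq_mul_xHat_lt hα0 (by linarith) ha hfa),
    sq_div_rpow_lt_sq_div_rpow (xHat_pos hα0 (by linarith)) hb.le (by linarith)
      (psiQ_xHat_sq_mul_lt hα0 (by linarith) hb hfb)⟩
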